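/- For every 0 ≤ d ≤ n−2, the number of cubes of Ω_n of dimension d equals C(n,d)·(2^n − 2^{d+1}), and consequently the Euler characteristic of Ω_n satisfies Σ_{d=0}^{n−2} (−1)^d · C(n,d) · (2^n − 2^{d+1}) = (−1)^n · (2^n − 2), as an identity of integers. -/

import Mathlib

/-!
A cube with `B ∪ D = E` is determined by an arbitrary `B ⊆ E` and a set `A ⊆ [n] \ E`
other than `∅` and `[n] \ E` (then `C = ([n] \ E) \ A`), so there are
`C(n,d) · 2^d · (2^(n-d) - 2)` cubes of dimension `d`. Summed over all `0 ≤ d ≤ n`, the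
alternating sum is `2^n (1 - 1)^n - 2 (1 - 2)^n` by the binomial theorem; the terms `d = n - 1`
(which vanishes) and `d = n` account for the rest.
-/

/-- A (potential) cube of the cubical complex `Ω_n`: an ordered 4-tuple of finite
subsets of `ℕ`. -/
structure Cube where
  A : Finset ℕ
  B : Finset ℕ
  C : Finset ℕ
  D : Finset ℕ
deriving DecidableEq

/-- `σ` is a cube of `Ω_n`: the four parts are pairwise disjoint, their union is
`[n] = {1,…,n}`, and `A`, `C` are nonempty. -/
def IsCube (n : ℕ) (σ : Cube) : Prop :=
  Disjoint σ.A σ.B ∧ Disjoint σ.A σ.C ∧ Disjoint σ.A σ.D ∧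
  Disjoint σ.B σ.C ∧ Disjoint σ.B σ.D ∧ Disjoint σ.C σ.D ∧
  σ.A ∪ σ.B ∪ σ.C ∪ σ.D = Finset.Icc 1 n ∧
  σ.A.Nonempty ∧ σ.C.Nonempty

/-- The dimension of a cube, `|B| + |D|`. -/
def Cube.dim (σ : Cube) : ℕ := σ.B.card + σ.D.card

/-- The pivot `α(σ) = min (A ∪ B)`. -/
noncomputable def Cube.alpha (σ : Cube) : ℕ := sInf (↑(σ.A ∪ σ.B) : Set ℕ)

/-- The pivot `β(σ) = max (B ∪ C)`. -/
noncomputable def Cube.beta (σ : Cube) : ℕ := sSup (↑(σ.B ∪ σ.C) : Set ℕ)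

def M1up (σ : Cube) : Prop := σ.alpha ∈ σ.B
def M1down (σ : Cube) : Prop := σ.alpha ∈ σ.A ∧ 2 ≤ σ.A.card
def M2up (σ : Cube) : Prop := σ.A = {σ.alpha} ∧ σ.beta ∈ σ.B
def M2down (σ : Cube) : Prop :=
  σ.A = {σ.alpha} ∧ σ.beta ∈ σ.C ∧ 2 ≤ σ.C.card ∧ σ.alpha < σ.beta
def Mdown (σ : Cube) : Prop := M1down σ ∨ M2down σ
def Mup (σ : Cube) : Prop := M1up σ ∨ M2up σ
def Critical (σ : Cube) : Prop := ¬ Mdown σ ∧ ¬ Mup σ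

/-- The covering relation: `τ` is obtained from `σ` by moving exactly one element
of `B(σ) ∪ D(σ)` into `A(σ)` or into `C(σ)`. -/
def Covers (σ τ : Cube) : Prop :=
  (∃ x ∈ σ.B, τ = ⟨insert x σ.A, σ.B.erase x, σ.C, σ.D⟩) ∨
  (∃ x ∈ σ.B, τ = ⟨σ.A, σ.B.erase x, insert x σ.C, σ.D⟩) ∨
  (∃ x ∈ σ.D, τ = ⟨insert x σ.A, σ.B, σ.C, σ.D.erase x⟩) ∨
  (∃ x ∈ σ.D, τ = ⟨σ.A, σ.B, insert x σ.C, σ.D.erase x⟩)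

open Classical in
/-- The matching `μ₊ : M↓ → M↑`. -/
noncomputable def muPlus (σ : Cube) : Cube :=
  if M1down σ then ⟨σ.A.erase σ.alpha, insert σ.alpha σ.B, σ.C, σ.D⟩
  else ⟨σ.A, insert σ.beta σ.B, σ.C.erase σ.beta, σ.D⟩

open Finset

def IsCubeOn (N : Finset ℕ) (σ : Cube) : Prop :=
  Disjoint σ.A σ.B ∧ Disjoint σ.A σ.C ∧ Disjoint σ.A σ.D ∧
  Disjoint σ.B σ.C ∧ Disjoint σ.B σ.D ∧ Disjoint σ.C σ.D ∧
  σ.A ∪ σ.B ∪ σ.C ∪ σ.D = N ∧ σ.A.Nonempty ∧ σ.C.Nonempty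

def cubesWithDirections (N E : Finset ℕ) : Finset Cube :=
  (E.powerset ×ˢ ((N \ E).powerset \ {∅, N \ E})).image
    fun p => ⟨p.2, p.1, (N \ E) \ p.2, E \ p.1⟩

lemma mem_cubesWithDirections {N E : Finset ℕ} {σ : Cube} (hE : E ⊆ N) :
    σ ∈ cubesWithDirections N E ↔ IsCubeOn N σ ∧ σ.B ∪ σ.D = E := by
  obtain ⟨A, B, C, D⟩ := σ
  simp only [cubesWithDirections, IsCubeOn, mem_image, mem_product, mem_powerset, mem_sdiff,
    mem_insert, mem_singleton, Prod.exists, Cube.mk.injEq]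
  constructor
  · rintro ⟨B, A, hBA, rfl, rfl, rfl, rfl⟩
    refine ⟨⟨?_, ?_, ?_, ?_, ?_, ?_, ?_, ?_, ?_⟩, ?_⟩
    all_goals
      simp only [disjoint_left, Finset.ext_iff, subset_iff, mem_union, mem_sdiff] at *
      grind
  · rintro ⟨⟨_, _, _, _, _, _, rfl, _, _⟩, rfl⟩
    refine ⟨B, A, ⟨?_, ?_, ?_⟩, rfl, rfl, ?_, ?_⟩
    all_goals
      simp only [disjoint_left, Finset.ext_iff, subset_iff, mem_union, mem_sdiff] at *
      grind

lemma card_powerset_sdiff_empty_self (S : Finset ℕ) :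
    #(S.powerset \ {∅, S}) = 2 ^ #S - 2 := by
  obtain rfl | hS := S.eq_empty_or_nonempty
  · simp
  · rw [card_sdiff_of_subset (by simp [insert_subset_iff]), card_powerset,
      card_pair hS.ne_empty.symm]

lemma card_cubesWithDirections (N E : Finset ℕ) :
    #(cubesWithDirections N E) = 2 ^ #E * (2 ^ #(N \ E) - 2) := by
  rw [cubesWithDirections, card_image_of_injective, card_product, card_powerset,
    card_powerset_sdiff_empty_self]
  rintro ⟨B, A⟩ ⟨B', A'⟩ h
  simp_all only [Cube.mk.injEq]

lemma setOf_isCubeOn_dim_eq (N : Finset ℕ) (d : ℕ) :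
    {σ | IsCubeOn N σ ∧ σ.dim = d} =
      ↑((N.powersetCard d).biUnion (cubesWithDirections N)) := by
  ext σ
  simp only [Set.mem_ofPred_eq, coe_biUnion, mem_coe, mem_powersetCard, Set.mem_iUnion,
    exists_prop]
  constructor
  · rintro ⟨hσ, rfl⟩
    have ⟨_, _, _, _, hBD, _, hU, _⟩ := hσ
    have hBDN : σ.B ∪ σ.D ⊆ N :=
      hU ▸ union_subset_union (subset_union_right.trans subset_union_left) subset_rfl
    exact ⟨σ.B ∪ σ.D, ⟨hBDN, card_union_of_disjoint hBD⟩,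
      (mem_cubesWithDirections hBDN).2 ⟨hσ, rfl⟩⟩
  · rintro ⟨E, ⟨hEN, rfl⟩, hmem⟩
    obtain ⟨hσ, rfl⟩ := (mem_cubesWithDirections hEN).1 hmem
    exact ⟨hσ, (card_union_of_disjoint hσ.2.2.2.2.1).symm⟩

lemma pairwiseDisjoint_cubesWithDirections (N : Finset ℕ) (d : ℕ) :
    (↑(N.powersetCard d) : Set (Finset ℕ)).PairwiseDisjoint (cubesWithDirections N) := by
  intro E hE E' hE' hne
  refine disjoint_left.2 fun σ hσ hσ' ↦ hne ?_
  rw [mem_coe, mem_powersetCard] at hE hE'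
  exact ((mem_cubesWithDirections hE.1).1 hσ).2.symm.trans
    ((mem_cubesWithDirections hE'.1).1 hσ').2

lemma ncard_setOf_isCubeOn_dim_eq (N : Finset ℕ) (d : ℕ) :
    {σ | IsCubeOn N σ ∧ σ.dim = d}.ncard = (#N).choose d * (2 ^ #N - 2 ^ (d + 1)) := by
  have hcard : ∀ E ∈ N.powersetCard d,
      #(cubesWithDirections N E) = 2 ^ d * (2 ^ (#N - d) - 2) := by
    intro E hE
    rw [mem_powersetCard] at hE
    rw [card_cubesWithDirections, card_sdiff_of_subset hE.1, hE.2]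
  rw [setOf_isCubeOn_dim_eq, Set.ncard_coe_finset,
    card_biUnion (pairwiseDisjoint_cubesWithDirections N d), sum_congr rfl hcard, sum_const,
    card_powersetCard, smul_eq_mul]
  obtain hd | hd := le_or_gt d #N
  · rw [Nat.mul_sub, ← pow_add, Nat.add_sub_cancel' hd, pow_succ]
  · rw [Nat.choose_eq_zero_of_lt hd, zero_mul, zero_mul]

lemma ncard_setOf_isCube_dim_eq (n d : ℕ) :
    {σ | IsCube n σ ∧ σ.dim = d}.ncard = n.choose d * (2 ^ n - 2 ^ (d + 1)) := by
  have h := ncard_setOf_isCubeOn_dim_eq (Icc 1 n) d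
  rw [Nat.card_Icc, Nat.add_sub_cancel] at h
  exact h

lemma alternating_sum_choose_mul_two_pow_sub (n : ℕ) (hn : n ≠ 0) :
    ∑ d ∈ range (n + 1), (-1 : ℤ) ^ d * n.choose d * (2 ^ n - 2 ^ (d + 1)) =
      -2 * (-1) ^ n := by
  -- the factor `1 ^ (n - d)` puts the second sum in the shape of `add_pow`
  have hterm : ∀ d ∈ range (n + 1), (-1 : ℤ) ^ d * n.choose d * (2 ^ n - 2 ^ (d + 1)) =
      2 ^ n * ((-1) ^ d * n.choose d) - 2 * ((-2) ^ d * 1 ^ (n - d) * n.choose d) := by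
    intro d _
    rw [neg_pow (2 : ℤ), one_pow]
    ring
  rw [sum_congr rfl hterm, sum_sub_distrib, ← mul_sum, ← mul_sum,
    Int.alternating_sum_range_choose, ← add_pow, if_neg hn]
  norm_num

lemma alternating_sum_range_sub_one_choose_mul_two_pow_sub (n : ℕ) (hn : 2 ≤ n) :
    ∑ d ∈ range (n - 1), (-1 : ℤ) ^ d * n.choose d * (2 ^ n - 2 ^ (d + 1)) =
      (-1) ^ n * (2 ^ n - 2) := by
  obtain ⟨m, rfl⟩ := Nat.exists_eq_add_of_le' hn
  have h := alternating_sum_choose_mul_two_pow_sub (m + 2) (by omega)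
  rw [sum_range_succ, sum_range_succ, Nat.choose_self, Nat.choose_succ_self_right] at h
  rw [show m + 2 - 1 = m + 1 by omega]
  push_cast at h
  linear_combination h

/-- For `0 ≤ d ≤ n−2`, the number of cubes of `Ω_n` of dimension `d` equals
`C(n,d)·(2^n − 2^{d+1})`, and consequently the Euler characteristic satisfies
`Σ_{d=0}^{n−2} (−1)^d C(n,d)(2^n − 2^{d+1}) = (−1)^n (2^n − 2)`. -/
theorem f_vector_and_euler (n : ℕ) (hn : 2 ≤ n) :
    (∀ d ≤ n - 2,
      {σ : Cube | IsCube n σ ∧ σ.dim = d}.ncard =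
        n.choose d * (2 ^ n - 2 ^ (d + 1))) ∧
    (∑ d ∈ Finset.range (n - 1),
        (-1 : ℤ) ^ d * (n.choose d : ℤ) * (2 ^ n - 2 ^ (d + 1)) =
      (-1 : ℤ) ^ n * (2 ^ n - 2)) :=
  ⟨fun d _ ↦ ncard_setOf_isCube_dim_eq n d,
    alternating_sum_range_sub_one_choose_mul_two_pow_sub n hn⟩
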